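/- In the even cycle C_{2n}, every center set A satisfies |A| ≤ ⌊4n/3⌋ or |A| = 2n. -/

import Mathlib

/-!
On `C_m` the distance from `u` to `v` is `min (v - u) (m - (v - u))`, so every
`S`-eccentricity is at most `m / 2`. For `m = 2n`, if all eccentricities equal `n`, the
center is the whole cycle. Otherwise the center contains no three consecutive vertices
`v - 1, v, v + 1`: a farthest point of `S` from `v` is then farther from `v - 1` or from
`v + 1`. Counting the members of each window `{v - 1, v, v + 1}` and summing over all `v`
shows that a set with no three consecutive elements has at most `2m / 3` elements.
-/

/-- The `S`-eccentricity of a vertex `v`. -/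
noncomputable def sEcc {V : Type*} (G : SimpleGraph V) (S : Finset V) (v : V) : ℕ :=
  S.sup fun x => G.dist v x

/-- The `S`-center of `G`. -/
noncomputable def sCenter {V : Type*} (G : SimpleGraph V) (S : Finset V) : Set V :=
  {v | ∀ w, sEcc G S v ≤ sEcc G S w}

/-- `A` is a center set of `G` if it is the `S`-center for some nonempty set `S`. -/
def IsCenterSet {V : Type*} (G : SimpleGraph V) (A : Set V) : Prop :=
  ∃ S : Finset V, S.Nonempty ∧ sCenter G S = A

open Finset SimpleGraph

namespace Fin

variable {m : ℕ}

/-- The length of the shorter of the two arcs from `0` to `k` on a cycle of length `m`. -/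
def cycNorm (k : Fin m) : ℕ := min k.val (m - k.val)

theorem val_sub_eq_ite (a b : Fin m) :
    (a - b).val = if b.val ≤ a.val then a.val - b.val else m + a.val - b.val := by
  split_ifs with h
  · exact coe_sub_iff_le.2 h
  · exact coe_sub_iff_lt.2 (not_le.1 h)

theorem two_mul_cycNorm_le (k : Fin m) : 2 * cycNorm k ≤ m := by
  unfold cycNorm; omega

variable [NeZero m]

theorem val_one_le : (1 : Fin m).val ≤ 1 := val_one' m ▸ Nat.mod_le 1 m

theorem cycNorm_add_one_le (k : Fin m) : cycNorm (k + 1) ≤ cycNorm k + 1 := by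
  have := val_one_le (m := m)
  have := k.is_lt
  unfold cycNorm; rw [val_add_eq_ite]; split_ifs <;> omega

theorem cycNorm_sub_one_le (k : Fin m) : cycNorm (k - 1) ≤ cycNorm k + 1 := by
  have := val_one_le (m := m)
  have := k.is_lt
  unfold cycNorm; rw [val_sub_eq_ite]; split_ifs <;> omega

theorem cycNorm_add_one_or_sub_one (k : Fin m) (hk : 2 * cycNorm k + 1 < m) :
    cycNorm (k + 1) = cycNorm k + 1 ∨ cycNorm (k - 1) = cycNorm k + 1 := by
  unfold cycNorm at *
  have h1 : (1 : Fin m).val = 1 := by rw [val_one', Nat.mod_eq_of_lt (by omega)]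
  have := k.is_lt
  rw [val_add_eq_ite, val_sub_eq_ite]; split_ifs <;> omega

theorem three_mul_ncard_le_of_no_three_consecutive (A : Set (Fin m))
    (h : ∀ v, v - 1 ∈ A → v ∈ A → v + 1 ∉ A) : 3 * A.ncard ≤ 2 * m := by
  classical
  have htranslate (c : Fin m) : ∑ v, (if v + c ∈ A then 1 else 0) = A.ncard := by
    rw [Fintype.sum_equiv (Equiv.addRight c) (fun v => if v + c ∈ A then 1 else 0)
      (fun w => if w ∈ A then 1 else 0) fun _ => rfl, sum_boole, Set.ncard_eq_toFinset_card']
    simp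
  calc 3 * A.ncard
      = ∑ v, ((if v + -1 ∈ A then 1 else 0) + (if v + 0 ∈ A then 1 else 0)
          + (if v + 1 ∈ A then 1 else 0)) := by
        simp only [sum_add_distrib, htranslate]; ring
    _ ≤ ∑ _v : Fin m, 2 := by
        refine sum_le_sum fun v _ => ?_
        have := h v
        rw [sub_eq_add_neg, add_zero] at *
        split_ifs <;> simp_all
    _ = 2 * m := by simp [mul_comm]

end Fin

namespace SimpleGraph

variable {V : Type*} {G : SimpleGraph V}

theorem Walk.apply_le_apply_add_length {f : V → ℕ} (hf : ∀ a b, G.Adj a b → f a ≤ f b + 1)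
    {u v : V} (p : G.Walk u v) : f u ≤ f v + p.length := by
  induction p with
  | nil => simp
  | cons h _ ih => have := hf _ _ h; rw [Walk.length_cons]; omega

theorem Reachable.apply_le_apply_add_dist {f : V → ℕ} (hf : ∀ a b, G.Adj a b → f a ≤ f b + 1)
    {u v : V} (h : G.Reachable u v) : f u ≤ f v + G.dist u v := by
  obtain ⟨p, hp⟩ := h.exists_walk_length_eq_dist
  exact hp ▸ p.apply_le_apply_add_length hf

variable {m : ℕ} [NeZero m]

theorem cycleGraph_adj_iff (hm : 1 < m) {a b : Fin m} :
    (cycleGraph m).Adj a b ↔ a = b + 1 ∨ b = a + 1 := by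
  have h1 : (1 : Fin m).val = 1 := by rw [Fin.val_one', Nat.mod_eq_of_lt hm]
  rw [cycleGraph_adj', ← h1, ← Fin.ext_iff, ← Fin.ext_iff, sub_eq_iff_eq_add, sub_eq_iff_eq_add,
    add_comm 1, add_comm 1]

open Fin.NatCast in
theorem cycleGraph_dist_add_le (hm : 1 < m) (u : Fin m) (k : ℕ) :
    (cycleGraph m).dist u (u + (k : Fin m)) ≤ k := by
  induction k with
  | zero => simp
  | succ k ih =>
    have hadj : (cycleGraph m).Adj (u + (k : Fin m)) (u + ((k + 1 : ℕ) : Fin m)) := by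
      rw [cycleGraph_adj_iff hm]; right; push_cast; abel
    calc (cycleGraph m).dist u (u + ((k + 1 : ℕ) : Fin m))
        ≤ (cycleGraph m).dist u (u + (k : Fin m))
          + (cycleGraph m).dist (u + (k : Fin m)) (u + ((k + 1 : ℕ) : Fin m)) :=
          (cycleGraph_preconnected u _).dist_triangle_left _
      _ ≤ k + 1 := by rw [dist_eq_one_iff_adj.2 hadj]; omega

theorem cycleGraph_dist_le (hm : 1 < m) (u v : Fin m) :
    (cycleGraph m).dist u v ≤ (v - u).val := by
  simpa using cycleGraph_dist_add_le hm u (v - u).val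

theorem cycleGraph_dist (hm : 1 < m) (u v : Fin m) :
    (cycleGraph m).dist u v = (v - u).cycNorm := by
  refine le_antisymm (le_min (cycleGraph_dist_le hm u v) ?_) ?_
  · have := dist_comm ▸ cycleGraph_dist_le hm v u
    rw [Fin.val_sub_eq_ite] at this ⊢
    split_ifs at this ⊢ <;> omega
  · have hf (a b : Fin m) (h : (cycleGraph m).Adj a b) :
        (v - a).cycNorm ≤ (v - b).cycNorm + 1 := by
      rcases (cycleGraph_adj_iff hm).1 h with rfl | rfl
      · simpa [sub_add_eq_sub_sub] using (v - b).cycNorm_sub_one_le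
      · simpa [sub_add_eq_sub_sub] using (v - a - 1).cycNorm_add_one_le
    simpa [Fin.cycNorm] using (cycleGraph_preconnected u v).apply_le_apply_add_dist hf

end SimpleGraph

section CycleCenter

variable {m : ℕ} [NeZero m]

theorem two_mul_sEcc_cycleGraph_le (hm : 1 < m) (S : Finset (Fin m)) (v : Fin m) :
    2 * sEcc (cycleGraph m) S v ≤ m := by
  suffices sEcc (cycleGraph m) S v ≤ m / 2 by omega
  refine Finset.sup_le fun x _ => (Nat.le_div_iff_mul_le two_pos).2 ?_
  rw [mul_comm, cycleGraph_dist hm]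
  exact (x - v).two_mul_cycNorm_le

/-- Since the eccentricity of `v` is below `m / 2`, a farthest point of `S` from `v` lies
strictly on one side of `v`, so it is one step farther from a neighbour of `v`. -/
theorem add_one_notMem_sCenter_cycleGraph (hm : 1 < m) {S : Finset (Fin m)} (hS : S.Nonempty)
    {w : Fin m}
    (hw : 2 * sEcc (cycleGraph m) S w + 1 < m) {v : Fin m}
    (hv₀ : v - 1 ∈ sCenter (cycleGraph m) S) (hv : v ∈ sCenter (cycleGraph m) S) :
    v + 1 ∉ sCenter (cycleGraph m) S := by
  intro hv₁
  obtain ⟨x, hxS, hx⟩ := exists_mem_eq_sup S hS fun x => (cycleGraph m).dist v x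
  have hnorm : (x - v).cycNorm = sEcc (cycleGraph m) S v := by
    rw [← cycleGraph_dist hm]; exact hx.symm
  have hlt : 2 * (x - v).cycNorm + 1 < m := by have := hv w; omega
  have hfar (u : Fin m) : (cycleGraph m).dist u x ≤ sEcc (cycleGraph m) S u := le_sup hxS
  rcases (x - v).cycNorm_add_one_or_sub_one hlt with h | h
  · have := hfar (v - 1)
    rw [cycleGraph_dist hm, show x - (v - 1) = x - v + 1 by abel, h, hnorm] at this
    have := hv₀ v; omega
  · have := hfar (v + 1)
    rw [cycleGraph_dist hm, show x - (v + 1) = x - v - 1 by abel, h, hnorm] at this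
    have := hv₁ v; omega

end CycleCenter

theorem card_centerSet_evenCycle_general (n : ℕ) (A : Set (Fin (2 * n)))
    (hA : IsCenterSet (SimpleGraph.cycleGraph (2 * n)) A) :
    A.ncard ≤ 4 * n / 3 ∨ A.ncard = 2 * n := by
  obtain ⟨S, hS, rfl⟩ := hA
  have hm : 1 < 2 * n := by have := hS.choose.pos; omega
  have : NeZero (2 * n) := ⟨by omega⟩
  by_cases hsmall : ∃ w, 2 * sEcc (cycleGraph (2 * n)) S w + 1 < 2 * n
  · obtain ⟨w, hw⟩ := hsmall
    have := Fin.three_mul_ncard_le_of_no_three_consecutive _ fun _ =>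
      add_one_notMem_sCenter_cycleGraph hm hS hw
    left; omega
  · simp only [not_exists, not_lt] at hsmall
    have : sCenter (cycleGraph (2 * n)) S = Set.univ := Set.eq_univ_of_forall fun v w => by
      have := two_mul_sEcc_cycleGraph_le hm S v; have := hsmall w; omega
    right; rw [this, Set.ncard_univ, Nat.card_fin]

/-- In the even cycle `C_{2n}`, every center set `A` satisfies `|A| ≤ ⌊4n/3⌋` or
`|A| = 2n`. -/
theorem card_centerSet_evenCycle (n : ℕ) (hn : 2 ≤ n) (A : Set (Fin (2 * n)))
    (hA : IsCenterSet (SimpleGraph.cycleGraph (2 * n)) A) :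
    A.ncard ≤ 4 * n / 3 ∨ A.ncard = 2 * n :=
  card_centerSet_evenCycle_general n A hA
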